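/- (Theorem 2.3, fourth identity, q-case: joint moments of the q-trinomial distribution of the second kind.) Let n ∈ ℕ, β₁, β₂ ∈ (0,1), and let m₁, m₂ be natural numbers with m₂ ≤ n and m₁ ≤ n − m₂. Then ∑_{x₂=m₂}^{n} ∑_{x₁=0}^{n−x₂} [x₁]_{m₁,q} · [x₂]_{m₂,q} · u(x₁,x₂) / ∏_{i=1}^{m₂} (1 − β₁·q^{n−m₂−x₁+i−1}) = [n]_{m₁+m₂,q} · β₁^{m₁} · β₂^{m₂}. -/

import Mathlib

open Finset

/-- q-integer `[k]_q = (1 - q^k)/(1 - q)`. -/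
noncomputable def qInt (q : ℝ) (k : ℤ) : ℝ := (1 - q ^ k) / (1 - q)

/-- q-factorial `[n]_q! = ∏_{i=1}^n [i]_q`. -/
noncomputable def qFact (q : ℝ) (n : ℕ) : ℝ := ∏ i ∈ Finset.Icc 1 n, qInt q (i : ℤ)

/-- q-binomial coefficient `C_q(n,k)`. -/
noncomputable def qBinom (q : ℝ) (n k : ℕ) : ℝ := qFact q n / (qFact q k * qFact q (n - k))

/-- q-falling factorial `[u]_{m,q} = ∏_{i=1}^m [u-i+1]_q`. -/
noncomputable def qFall (q : ℝ) (u : ℤ) (m : ℕ) : ℝ := ∏ i ∈ Finset.Icc 1 m, qInt q (u - (i : ℤ) + 1)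

/-- `[k]_{q⁻¹} = q^{1-k} · [k]_q`. -/
noncomputable def qIntInv (q : ℝ) (k : ℤ) : ℝ := q ^ (1 - k) * qInt q k

/-- `[u]_{m,q⁻¹} = ∏_{i=1}^m [u-i+1]_{q⁻¹}`. -/
noncomputable def qFallInv (q : ℝ) (u : ℤ) (m : ℕ) : ℝ := ∏ i ∈ Finset.Icc 1 m, qIntInv q (u - (i : ℤ) + 1)

/-- `b(k) = k(k-1)/2`. -/
def bb (k : ℕ) : ℕ := k * (k - 1) / 2

/-- `⟨1 ⊕ α⟩_m = ∏_{i=1}^m (1 + α q^{i-1})`. -/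
noncomputable def oplus (q α : ℝ) (m : ℕ) : ℝ := ∏ i ∈ Finset.Icc 1 m, (1 + α * q ^ (i - 1))

/-- `⟨1 ⊖ β⟩_m = ∏_{i=1}^m (1 - β q^{i-1})`. -/
noncomputable def ominus (q β : ℝ) (m : ℕ) : ℝ := ∏ i ∈ Finset.Icc 1 m, (1 - β * q ^ (i - 1))

/-- q-trinomial coefficient `T_q(n; x₁, x₂)`. -/
noncomputable def qTri (q : ℝ) (n x1 x2 : ℕ) : ℝ :=
  qFact q n / (qFact q x1 * qFact q x2 * qFact q (n - x1 - x2))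

/-- pmf of the q-trinomial distribution of the second kind. -/
noncomputable def upmf (q b1 b2 : ℝ) (n x1 x2 : ℕ) : ℝ :=
  qTri q n x1 x2 * b1 ^ x1 * b2 ^ x2 * ominus q b1 (n - x1) * ominus q b2 (n - x1 - x2)

/-!
Cancelling the denominator against `⟨1 ⊖ β₁⟩_{n-x₁}` leaves `⟨1 ⊖ β₁⟩_{n-x₁-m₂}`. For
`x₁ ≥ m₁`, `x₂ ≥ m₂` the q-falling factorials combine with the trinomial coefficient as
`[x₁]_{m₁}[x₂]_{m₂} T_q(n;x₁,x₂) = [n]_{m₁+m₂} T_q(n-m₁-m₂; x₁-m₁, x₂-m₂)` (terms with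
`x₁ < m₁` vanish), so after the shift `yᵢ = xᵢ - mᵢ` the sum is `[n]_{m₁+m₂} β₁^{m₁} β₂^{m₂}`
times the total mass of the distribution with parameter `n - m₁ - m₂`. That mass is `1`: it
factors into two nested instances of the q-binomial theorem
`∑ₖ C_q(M,k) tᵏ ⟨1 ⊖ t⟩_{M-k} = 1`, proved by induction on `M` with q-Pascal.
-/

section QCalculus

variable {q : ℝ}

lemma qInt_natCast (n : ℕ) : qInt q n = (1 - q ^ n) / (1 - q) := by
  simp [qInt]

lemma qInt_natCast_add (a b : ℕ) : qInt q ↑(a + b) = qInt q a + q ^ a * qInt q b := by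
  rcases eq_or_ne q 1 with rfl | hq
  · simp [qInt]
  · have : 1 - q ≠ 0 := sub_ne_zero.2 hq.symm
    rw [qInt_natCast, qInt_natCast, qInt_natCast, pow_add]
    field_simp
    ring

lemma qInt_natCast_pos (hq0 : 0 ≤ q) (hq1 : q < 1) {n : ℕ} (hn : n ≠ 0) : 0 < qInt q n := by
  rw [qInt_natCast]
  exact div_pos (sub_pos.2 (pow_lt_one₀ hq0 hq1 hn)) (sub_pos.2 hq1)

lemma qFact_pos (hq0 : 0 ≤ q) (hq1 : q < 1) (n : ℕ) : 0 < qFact q n :=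
  prod_pos fun i hi => qInt_natCast_pos hq0 hq1 (by simp at hi; omega)

@[simp]
lemma qFact_zero : qFact q 0 = 1 := by simp [qFact]

lemma qFact_succ (n : ℕ) : qFact q (n + 1) = qFact q n * qInt q ↑(n + 1) := by
  rw [qFact, prod_Icc_succ_top (by omega), qFact]

lemma qFall_succ (u : ℤ) (m : ℕ) : qFall q u (m + 1) = qFall q u m * qInt q (u - m) := by
  rw [qFall, prod_Icc_succ_top (by omega), qFall]
  push_cast
  ring_nf

lemma qFall_natCast_of_lt {x m : ℕ} (h : x < m) : qFall q x m = 0 :=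
  prod_eq_zero (i := x + 1) (by simp; omega) (by simp [qInt])

lemma qFall_natCast_mul_qFact_sub {x m : ℕ} (h : m ≤ x) :
    qFall q x m * qFact q (x - m) = qFact q x := by
  induction m with
  | zero => simp [qFall]
  | succ m ih =>
    have hx : x - m = x - (m + 1) + 1 := by omega
    rw [← ih (by omega), hx, qFact_succ, ← hx, qFall_succ, Nat.cast_sub (by omega)]
    ring

lemma qFall_natCast_eq_div (hq0 : 0 ≤ q) (hq1 : q < 1) {x m : ℕ} (h : m ≤ x) :
    qFall q x m = qFact q x / qFact q (x - m) :=
  eq_div_of_mul_eq (qFact_pos hq0 hq1 _).ne' (qFall_natCast_mul_qFact_sub h)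

lemma qBinom_zero_right (hq0 : 0 ≤ q) (hq1 : q < 1) (M : ℕ) : qBinom q M 0 = 1 := by
  simp [qBinom, (qFact_pos hq0 hq1 M).ne']

lemma qBinom_self (hq0 : 0 ≤ q) (hq1 : q < 1) (M : ℕ) : qBinom q M M = 1 := by
  simp [qBinom, (qFact_pos hq0 hq1 M).ne']

lemma qBinom_succ_succ (hq0 : 0 ≤ q) (hq1 : q < 1) {M k : ℕ} (h : k < M) :
    qBinom q (M + 1) (k + 1) = qBinom q M (k + 1) + q ^ (M - k) * qBinom q M k := by
  obtain ⟨d, rfl⟩ : ∃ d, M = k + 1 + d := ⟨M - (k + 1), by omega⟩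
  have hsplit :
      qInt q ↑(k + 1 + d + 1) = qInt q ↑(d + 1) + q ^ (d + 1) * qInt q ↑(k + 1) := by
    rw [← qInt_natCast_add, show d + 1 + (k + 1) = k + 1 + d + 1 by omega]
  have hk := (qInt_natCast_pos hq0 hq1 (n := k + 1) (by omega)).ne'
  have hd := (qInt_natCast_pos hq0 hq1 (n := d + 1) (by omega)).ne'
  have h1 := (qFact_pos hq0 hq1 (k + 1 + d)).ne'
  have h2 := (qFact_pos hq0 hq1 k).ne'
  have h3 := (qFact_pos hq0 hq1 d).ne'
  simp only [qBinom, show k + 1 + d + 1 - (k + 1) = d + 1 by omega,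
    show k + 1 + d - (k + 1) = d by omega, show k + 1 + d - k = d + 1 by omega,
    qFact_succ, hsplit]
  field_simp

end QCalculus

section Ominus

variable {q : ℝ}

@[simp]
lemma ominus_zero (β : ℝ) : ominus q β 0 = 1 := by simp [ominus]

lemma ominus_succ (β : ℝ) (m : ℕ) :
    ominus q β (m + 1) = ominus q β m * (1 - β * q ^ m) := by
  rw [ominus, prod_Icc_succ_top (by omega), ominus, Nat.add_sub_cancel]

lemma ominus_add (β : ℝ) (a m : ℕ) :
    ominus q β (a + m) = ominus q β a * ∏ i ∈ Icc 1 m, (1 - β * q ^ (a + i - 1)) := by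
  induction m with
  | zero => simp
  | succ m ih =>
    rw [← add_assoc, ominus_succ, ih, prod_Icc_succ_top (by omega), Nat.add_succ_sub_one,
      mul_assoc]

lemma one_sub_mul_pow_pos (hq0 : 0 < q) (hq1 : q ≤ 1) {β : ℝ} (hβ : β < 1) (k : ℕ) :
    0 < 1 - β * q ^ k := by
  nlinarith [mul_pos (sub_pos.2 hβ) (pow_pos hq0 k), pow_le_one₀ hq0.le hq1 (n := k)]

theorem sum_qBinom_mul_pow_mul_ominus (hq0 : 0 ≤ q) (hq1 : q < 1) (t : ℝ) (M : ℕ) :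
    ∑ k ∈ range (M + 1), qBinom q M k * t ^ k * ominus q t (M - k) = 1 := by
  induction M with
  | zero => simp [qBinom_zero_right hq0 hq1]
  | succ M ih =>
    rw [← ih]
    set A : ℕ → ℝ := fun k => qBinom q M k * t ^ k * ominus q t (M - k)
    set B : ℕ → ℝ := fun k => q ^ (M - k) * qBinom q M k * t ^ (k + 1) * ominus q t (M - k)
    have hmid : ∀ k ∈ range M, qBinom q (M + 1) (k + 1) * t ^ (k + 1) * ominus q t (M - k)
        = A (k + 1) - (B (k + 1) - B k) := by
      intro k hk
      obtain ⟨d, hd⟩ : ∃ d, M - k = d + 1 := ⟨M - (k + 1), by simp at hk; omega⟩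
      simp only [A, B, qBinom_succ_succ hq0 hq1 (mem_range.1 hk), hd,
        show M - (k + 1) = d by omega, ominus_succ]
      ring
    have hfirst : qBinom q (M + 1) 0 * t ^ 0 * ominus q t (M + 1) = A 0 - B 0 := by
      simp only [A, B, qBinom_zero_right hq0 hq1, Nat.sub_zero, ominus_succ]
      ring
    have hlast : qBinom q (M + 1) (M + 1) * t ^ (M + 1) = B M := by
      simp [B, qBinom_self hq0 hq1]
    rw [sum_range_succ, sum_range_succ', Nat.sub_self, ominus_zero, mul_one, hlast,
      sum_congr rfl fun k hk => by rw [Nat.add_sub_add_right, hmid k hk], Nat.sub_zero, hfirst,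
      sum_sub_distrib, sum_range_sub, sum_range_succ' A]
    ring

end Ominus

lemma sum_triangle_comm {M : Type*} [AddCommMonoid M] (N : ℕ) (f : ℕ → ℕ → M) :
    ∑ x2 ∈ range (N + 1), ∑ x1 ∈ range (N - x2 + 1), f x1 x2
      = ∑ x1 ∈ range (N + 1), ∑ x2 ∈ range (N - x1 + 1), f x1 x2 :=
  sum_comm' fun _ _ => by simp only [mem_range]; omega

lemma sum_triangle_shift {M : Type*} [AddCommMonoid M] {n m1 m2 : ℕ} (h : m1 + m2 ≤ n)
    (f : ℕ → ℕ → M) (hf : ∀ x1 x2, x1 < m1 → f x1 x2 = 0) :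
    ∑ x2 ∈ Icc m2 n, ∑ x1 ∈ range (n - x2 + 1), f x1 x2
      = ∑ y2 ∈ range (n - m1 - m2 + 1), ∑ y1 ∈ range (n - m1 - m2 - y2 + 1),
          f (y1 + m1) (y2 + m2) := by
  have hinner :
      ∀ K x2, ∑ x1 ∈ range K, f x1 x2 = ∑ y1 ∈ range (K - m1), f (y1 + m1) x2 := by
    intro K x2
    rw [← sum_subset (fun x => by simp : Ico m1 K ⊆ range K)
      fun x1 hK hx1 => hf x1 x2 (by simp at hK hx1; omega), sum_Ico_eq_sum_range]
    simp only [add_comm m1]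
  rw [← Ico_add_one_right_eq_Icc, sum_Ico_eq_sum_range, ← sum_subset
    (f := fun y2 => ∑ x1 ∈ range (n - (m2 + y2) + 1), f x1 (m2 + y2))
    (range_subset_range.2 (by omega : n - m1 - m2 + 1 ≤ n + 1 - m2)) fun y2 hn hy2 => by
      rw [hinner, show n - (m2 + y2) + 1 - m1 = 0 by simp at hn hy2; omega, sum_range_zero]]
  refine sum_congr rfl fun y2 hy2 => ?_
  rw [hinner, add_comm m2, show n - (y2 + m2) + 1 - m1 = n - m1 - m2 - y2 + 1 by
    simp at hy2; omega]

section Trinomial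

variable {q : ℝ} (hq0 : 0 ≤ q) (hq1 : q < 1)
include hq0 hq1

lemma qTri_eq_qBinom_mul_qBinom (N x1 x2 : ℕ) :
    qTri q N x1 x2 = qBinom q N x1 * qBinom q (N - x1) x2 := by
  have := (qFact_pos hq0 hq1 (N - x1)).ne'
  simp only [qTri, qBinom, Nat.sub_sub]
  field_simp

lemma upmf_eq_mul (β1 β2 : ℝ) (N x1 x2 : ℕ) :
    upmf q β1 β2 N x1 x2 = (qBinom q N x1 * β1 ^ x1 * ominus q β1 (N - x1)) *
      (qBinom q (N - x1) x2 * β2 ^ x2 * ominus q β2 (N - x1 - x2)) := by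
  rw [upmf, qTri_eq_qBinom_mul_qBinom hq0 hq1]
  ring

theorem sum_upmf (β1 β2 : ℝ) (N : ℕ) :
    ∑ x2 ∈ range (N + 1), ∑ x1 ∈ range (N - x2 + 1), upmf q β1 β2 N x1 x2 = 1 := by
  rw [sum_triangle_comm, ← sum_qBinom_mul_pow_mul_ominus hq0 hq1 β1 N]
  refine sum_congr rfl fun x1 _ => ?_
  simp only [upmf_eq_mul hq0 hq1, ← mul_sum,
    sum_qBinom_mul_pow_mul_ominus hq0 hq1, mul_one]

lemma qFall_mul_qFall_mul_qTri {n m1 m2 : ℕ} (h : m1 + m2 ≤ n) (y1 y2 : ℕ) :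
    qFall q ↑(y1 + m1) m1 * qFall q ↑(y2 + m2) m2 * qTri q n (y1 + m1) (y2 + m2)
      = qFall q n (m1 + m2) * qTri q (n - m1 - m2) y1 y2 := by
  rw [qFall_natCast_eq_div hq0 hq1 (by omega), qFall_natCast_eq_div hq0 hq1 (by omega),
    qFall_natCast_eq_div hq0 hq1 (by omega), qTri, qTri, Nat.add_sub_cancel, Nat.add_sub_cancel,
    show n - (y1 + m1) - (y2 + m2) = n - m1 - m2 - y1 - y2 by omega, Nat.sub_sub n m1]
  have := (qFact_pos hq0 hq1 (y1 + m1)).ne'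
  have := (qFact_pos hq0 hq1 (y2 + m2)).ne'
  have := (qFact_pos hq0 hq1 (n - (m1 + m2))).ne'
  field_simp

end Trinomial

theorem stmt13_general (q : ℝ) (hq0 : 0 < q) (hq1 : q < 1) (n : ℕ) (β1 β2 : ℝ)
    (hβ1' : β1 < 1)
    (m1 m2 : ℕ) (hm2 : m2 ≤ n) (hm1 : m1 ≤ n - m2) :
    ∑ x2 ∈ Finset.Icc m2 n, ∑ x1 ∈ Finset.range (n - x2 + 1),
      qFall q (x1 : ℤ) m1 * qFall q (x2 : ℤ) m2 * upmf q β1 β2 n x1 x2 /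
        ∏ i ∈ Finset.Icc 1 m2, (1 - β1 * q ^ (n - m2 - x1 + i - 1))
      = qFall q (n : ℤ) (m1 + m2) * β1 ^ m1 * β2 ^ m2 := by
  have hmn : m1 + m2 ≤ n := by omega
  set F : ℕ → ℕ → ℝ := fun x1 x2 => qFall q x1 m1 * qFall q x2 m2 * qTri q n x1 x2 *
    β1 ^ x1 * β2 ^ x2 * ominus q β1 (n - m2 - x1) * ominus q β2 (n - x1 - x2)
  have hcancel : ∀ x2 ∈ Icc m2 n, ∀ x1 ∈ range (n - x2 + 1),
      qFall q x1 m1 * qFall q x2 m2 * upmf q β1 β2 n x1 x2 /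
        ∏ i ∈ Icc 1 m2, (1 - β1 * q ^ (n - m2 - x1 + i - 1)) = F x1 x2 := by
    intro x2 hx2 x1 hx1
    have hsplit := ominus_add (q := q) β1 (n - m2 - x1) m2
    rw [show n - m2 - x1 + m2 = n - x1 by simp at hx2 hx1; omega] at hsplit
    have hpos := prod_pos fun i (_ : i ∈ Icc 1 m2) =>
      one_sub_mul_pow_pos hq0 hq1.le hβ1' (n - m2 - x1 + i - 1)
    rw [upmf, hsplit, div_eq_iff hpos.ne']
    ring
  have hshift : ∀ y1 y2, F (y1 + m1) (y2 + m2) =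
      qFall q n (m1 + m2) * β1 ^ m1 * β2 ^ m2 * upmf q β1 β2 (n - m1 - m2) y1 y2 := by
    intro y1 y2
    simp only [F, upmf]
    rw [qFall_mul_qFall_mul_qTri hq0.le hq1 hmn,
      show n - m2 - (y1 + m1) = n - m1 - m2 - y1 by omega,
      show n - (y1 + m1) - (y2 + m2) = n - m1 - m2 - y1 - y2 by omega]
    ring
  rw [sum_congr rfl fun x2 hx2 => sum_congr rfl (hcancel x2 hx2),
    sum_triangle_shift hmn F fun x1 x2 h => by simp [F, qFall_natCast_of_lt h]]
  simp only [hshift, ← mul_sum, sum_upmf hq0.le hq1, mul_one]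

theorem stmt13 (q : ℝ) (hq0 : 0 < q) (hq1 : q < 1) (n : ℕ) (β1 β2 : ℝ)
    (hβ1 : 0 < β1) (hβ1' : β1 < 1) (hβ2 : 0 < β2) (hβ2' : β2 < 1)
    (m1 m2 : ℕ) (hm2 : m2 ≤ n) (hm1 : m1 ≤ n - m2) :
    ∑ x2 ∈ Finset.Icc m2 n, ∑ x1 ∈ Finset.range (n - x2 + 1),
      qFall q (x1 : ℤ) m1 * qFall q (x2 : ℤ) m2 * upmf q β1 β2 n x1 x2 /
        ∏ i ∈ Finset.Icc 1 m2, (1 - β1 * q ^ (n - m2 - x1 + i - 1))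
      = qFall q (n : ℤ) (m1 + m2) * β1 ^ m1 * β2 ^ m2 :=
  stmt13_general q hq0 hq1 n β1 β2 hβ1' m1 m2 hm2 hm1
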